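/- Let p be a prime, n ≥ 1, T ∈ GL(n, ℚ_p) and a ∈ ℚ_p^n \ {0} with ‖T^{-1}(a)‖_p ≠ 1. Then the map T̄_a : S_n → S_n is surjective (equivalently, a homeomorphism of S_n) if and only if ‖T^{-1}(a)‖_p < 1. -/
import Mathlib


open scoped MatrixGroups

/-- The real number `r`, assumed to be an integer power of `p`, interpreted as the
corresponding scalar in `ℚ_p` (junk value otherwise). -/
noncomputable def realToPadic (p : ℕ) [Fact p.Prime] (r : ℝ) : ℚ_[p] :=
  (p : ℚ_[p]) ^ ⌊Real.logb p r⌋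

/-- The `affine` map `T̄_a` on the `p`-adic unit sphere:
`T̄_a(x) = ‖a + T(x)‖_p ⬝ (a + T(x))`. -/
noncomputable def affineSphereMap (p : ℕ) [Fact p.Prime] {n : ℕ}
    (T : Matrix (Fin n) (Fin n) ℚ_[p]) (a : Fin n → ℚ_[p]) (y : Fin n → ℚ_[p]) :
    Fin n → ℚ_[p] :=
  realToPadic p ‖a + T.mulVec y‖ • (a + T.mulVec y)

section Aux

variable {p : ℕ} [Fact p.Prime] {n : ℕ}

lemma pnorm_add_le_max (u v : Fin n → ℚ_[p]) : ‖u + v‖ ≤ max ‖u‖ ‖v‖ := by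
  refine (pi_norm_le_iff_of_nonneg (le_max_of_le_left (norm_nonneg u))).2 fun i => ?_
  exact (Padic.nonarchimedean _ _).trans
    (max_le_max (norm_le_pi_norm u i) (norm_le_pi_norm v i))

lemma pnorm_add_eq_left {u v : Fin n → ℚ_[p]} (h : ‖v‖ < ‖u‖) : ‖u + v‖ = ‖u‖ := by
  refine le_antisymm ((pnorm_add_le_max u v).trans (max_le le_rfl h.le)) ?_
  have h2 : ‖u‖ ≤ max ‖u + v‖ ‖v‖ := by
    have := pnorm_add_le_max (u + v) (-v)
    simpa using this
  rcases max_cases ‖u + v‖ ‖v‖ with ⟨h1, _⟩ | ⟨h1, _⟩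
  · rw [h1] at h2; exact h2
  · rw [h1] at h2; exact absurd h2 h.not_ge

lemma exists_zpow_norm (hn : 1 ≤ n) (v : Fin n → ℚ_[p]) (hv : v ≠ 0) :
    ∃ k : ℤ, ‖v‖ = (p : ℝ) ^ k := by
  haveI : Nonempty (Fin n) := Fin.pos_iff_nonempty.mp hn
  obtain ⟨i, -, hi⟩ := Finset.exists_mem_eq_sup (Finset.univ : Finset (Fin n))
    Finset.univ_nonempty (fun i => ‖v i‖₊)
  have hnorm : ‖v‖ = ‖v i‖ := by
    rw [Pi.norm_def, hi]; rfl
  have hvi : v i ≠ 0 := by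
    intro h
    apply hv
    have h0 : ‖v‖ = 0 := by rw [hnorm, h, norm_zero]
    exact norm_eq_zero.mp h0
  exact ⟨-(v i).valuation, by rw [hnorm, Padic.norm_eq_zpow_neg_valuation hvi]⟩

lemma realToPadic_zpow (k : ℤ) : realToPadic p ((p : ℝ) ^ k) = (p : ℚ_[p]) ^ k := by
  have hp : (1 : ℝ) < p := by exact_mod_cast (Fact.out : p.Prime).one_lt
  have h : Real.logb p ((p : ℝ) ^ k) = k := by
    rw [show ((p : ℝ) ^ k) = (p : ℝ) ^ (k : ℝ) from (Real.rpow_intCast _ _).symm]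
    exact Real.logb_rpow (by linarith) (by linarith)
  rw [realToPadic, h, Int.floor_intCast]

lemma pcast_ne_zero : ((p : ℚ_[p]) : ℚ_[p]) ≠ 0 :=
  Nat.cast_ne_zero.mpr (Fact.out : p.Prime).ne_zero

lemma smul_norm_one {y : Fin n → ℚ_[p]} (hy : ‖y‖ = 1) (k : ℤ) :
    realToPadic p ‖(p : ℚ_[p]) ^ k • y‖ • ((p : ℚ_[p]) ^ k • y) = y := by
  have h1 : ‖(p : ℚ_[p]) ^ k • y‖ = (p : ℝ) ^ (-k) := by
    rw [norm_smul, Padic.norm_p_zpow, hy, mul_one]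
  rw [h1, realToPadic_zpow, smul_smul, ← zpow_add₀ pcast_ne_zero, neg_add_cancel,
    zpow_zero, one_smul]

lemma norm_p_zpow_sub_one {j : ℤ} (hj : j ≠ 0) : 1 ≤ ‖(p : ℚ_[p]) ^ j - 1‖ := by
  have hp : (1 : ℝ) < p := by exact_mod_cast (Fact.out : p.Prime).one_lt
  have hne : ‖(p : ℚ_[p]) ^ j‖ ≠ ‖(-1 : ℚ_[p])‖ := by
    rw [Padic.norm_p_zpow, norm_neg, norm_one]
    intro h
    apply hj
    have := zpow_right_injective₀ (by linarith : (0:ℝ) < p) (by linarith)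
      (show (p:ℝ) ^ (-j) = (p:ℝ) ^ (0:ℤ) by rw [h, zpow_zero])
    omega
  have := Padic.add_eq_max_of_ne hne
  rw [sub_eq_add_neg]
  rw [this, norm_neg, norm_one]
  exact le_max_right _ _

end Aux

/-- For `T ∈ GL(n, ℚ_p)` and `a ≠ 0` with `‖T⁻¹(a)‖_p ≠ 1`, the map `T̄_a : S_n → S_n` is
surjective onto the `p`-adic unit sphere iff `‖T⁻¹(a)‖_p < 1`. -/
theorem stmt14 (p : ℕ) [Fact p.Prime] (n : ℕ) (hn : 1 ≤ n) (T : GL (Fin n) ℚ_[p])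
    (a : Fin n → ℚ_[p]) (ha : a ≠ 0)
    (hnorm : ‖((T⁻¹ : GL (Fin n) ℚ_[p]) : Matrix (Fin n) (Fin n) ℚ_[p]).mulVec a‖ ≠ 1) :
    Set.SurjOn (affineSphereMap p (T : Matrix (Fin n) (Fin n) ℚ_[p]) a)
        (Metric.sphere (0 : Fin n → ℚ_[p]) 1) (Metric.sphere (0 : Fin n → ℚ_[p]) 1) ↔
      ‖((T⁻¹ : GL (Fin n) ℚ_[p]) : Matrix (Fin n) (Fin n) ℚ_[p]).mulVec a‖ < 1 := by
  set M : Matrix (Fin n) (Fin n) ℚ_[p] := (T : Matrix (Fin n) (Fin n) ℚ_[p]) with hM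
  set N : Matrix (Fin n) (Fin n) ℚ_[p] := ((T⁻¹ : GL (Fin n) ℚ_[p]) :
    Matrix (Fin n) (Fin n) ℚ_[p]) with hN
  have hMN : M * N = 1 := T.mul_inv
  have hNM : N * M = 1 := T.inv_mul
  have hMNv : ∀ x, M.mulVec (N.mulVec x) = x := fun x => by
    rw [Matrix.mulVec_mulVec, hMN, Matrix.one_mulVec]
  have hNMv : ∀ x, N.mulVec (M.mulVec x) = x := fun x => by
    rw [Matrix.mulVec_mulVec, hNM, Matrix.one_mulVec]
  set b : Fin n → ℚ_[p] := N.mulVec a with hb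
  have hMb : M.mulVec b = a := hMNv a
  have hb0 : b ≠ 0 := by
    intro h
    apply ha
    rw [← hMb, h, Matrix.mulVec_zero]
  constructor
  · -- surjective → ‖b‖ < 1, by contraposition
    intro hsurj
    by_contra hlt
    have hgt : 1 < ‖b‖ := lt_of_le_of_ne (not_lt.mp hlt) (Ne.symm hnorm)
    obtain ⟨m, hm⟩ := exists_zpow_norm hn a ha
    set y : Fin n → ℚ_[p] := (p : ℚ_[p]) ^ m • a with hy
    have hy1 : ‖y‖ = 1 := by
      rw [hy, norm_smul, Padic.norm_p_zpow, hm, ← zpow_add₀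
        (by exact_mod_cast (Fact.out : p.Prime).pos.ne' : (p:ℝ) ≠ 0), neg_add_cancel, zpow_zero]
    obtain ⟨x, hxmem, hxy⟩ := hsurj (mem_sphere_zero_iff_norm.mpr hy1)
    have hx1 : ‖x‖ = 1 := mem_sphere_zero_iff_norm.mp hxmem
    set w : Fin n → ℚ_[p] := a + M.mulVec x with hw
    have hwM : w = M.mulVec (b + x) := by
      rw [Matrix.mulVec_add, hMb]
    have hbx : ‖b + x‖ = ‖b‖ := pnorm_add_eq_left (by rw [hx1]; exact hgt)
    have hbx0 : b + x ≠ 0 := by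
      intro h
      rw [h, norm_zero] at hbx
      exact (by linarith : (0:ℝ) < ‖b‖).ne' hbx.symm
    have hw0 : w ≠ 0 := by
      intro h
      apply hbx0
      rw [← hNMv (b + x), ← hwM, h, Matrix.mulVec_zero]
    obtain ⟨v, hv⟩ := exists_zpow_norm hn w hw0
    have hxy' : (p : ℚ_[p]) ^ v • w = y := by
      have h0 : realToPadic p ‖w‖ • w = y := hxy
      rwa [hv, realToPadic_zpow] at h0
    have h2 : (p : ℚ_[p]) ^ v • (b + x) = (p : ℚ_[p]) ^ m • b := by
      have h3 := congrArg N.mulVec hxy'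
      rwa [hy, Matrix.mulVec_smul, Matrix.mulVec_smul, hwM, hNMv, ← hb] at h3
    have h4 : b + x = (p : ℚ_[p]) ^ (m - v) • b := by
      calc b + x = ((p:ℚ_[p]) ^ (-v) * (p:ℚ_[p]) ^ v) • (b + x) := by
            rw [← zpow_add₀ pcast_ne_zero, neg_add_cancel, zpow_zero, one_smul]
        _ = (p:ℚ_[p]) ^ (-v) • ((p:ℚ_[p]) ^ v • (b + x)) := by rw [mul_smul]
        _ = (p:ℚ_[p]) ^ (-v) • ((p:ℚ_[p]) ^ m • b) := by rw [h2]
        _ = (p:ℚ_[p]) ^ (-v + m) • b := by rw [smul_smul, ← zpow_add₀ pcast_ne_zero]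
        _ = (p:ℚ_[p]) ^ (m - v) • b := by rw [show -v + m = m - v by omega]
    have h6 : x = ((p:ℚ_[p]) ^ (m - v) - 1) • b := by
      rw [sub_smul, one_smul, ← h4]; abel
    by_cases hj : m - v = 0
    · rw [hj, zpow_zero, sub_self, zero_smul] at h6
      rw [h6, norm_zero] at hx1
      exact one_ne_zero hx1.symm
    · have h7 := norm_p_zpow_sub_one (p := p) hj
      have h8 : ‖x‖ = ‖(p:ℚ_[p]) ^ (m - v) - 1‖ * ‖b‖ := by rw [h6, norm_smul]
      have h9 : (1:ℝ) < ‖x‖ := by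
        rw [h8]
        calc (1:ℝ) < ‖b‖ := hgt
          _ ≤ _ := le_mul_of_one_le_left (norm_nonneg b) h7
      linarith [hx1 ▸ h9]
  · -- ‖b‖ < 1 → surjective
    intro hlt y hymem
    have hy1 : ‖y‖ = 1 := mem_sphere_zero_iff_norm.mp hymem
    have hy0 : y ≠ 0 := by
      intro h; rw [h, norm_zero] at hy1; linarith
    set c : Fin n → ℚ_[p] := N.mulVec y with hc
    have hMc : M.mulVec c = y := hMNv y
    have hc0 : c ≠ 0 := by
      intro h
      apply hy0
      rw [← hMc, h, Matrix.mulVec_zero]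
    obtain ⟨k, hk⟩ := exists_zpow_norm hn c hc0
    set μ : ℚ_[p] := (p : ℚ_[p]) ^ k with hμ
    have hμc : ‖μ • c‖ = 1 := by
      rw [hμ, norm_smul, Padic.norm_p_zpow, hk, ← zpow_add₀
        (by exact_mod_cast (Fact.out : p.Prime).pos.ne' : (p:ℝ) ≠ 0), neg_add_cancel, zpow_zero]
    set x : Fin n → ℚ_[p] := μ • c - b with hx
    have hx1 : ‖x‖ = 1 := by
      rw [hx, sub_eq_add_neg, pnorm_add_eq_left (by rw [norm_neg, hμc]; exact hlt), hμc]
    refine ⟨x, mem_sphere_zero_iff_norm.mpr hx1, ?_⟩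
    have hax : a + M.mulVec x = μ • y := by
      rw [hx, Matrix.mulVec_sub, Matrix.mulVec_smul, hMc, hMb]
      abel
    rw [affineSphereMap, hax, hμ]
    exact smul_norm_one hy1 k
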